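/- arXiv:0808.0319 — 3 statements merged into one kernel-verified Lean document; each statement's English description precedes it below -/
import Mathlib

section
/- Let k be a field of characteristic 0 and U = k⟨⟨X₀,X₁⟩⟩. Let ∂₀ be the continuous derivation of U with ∂₀(X₀) = 1 and ∂₀(X₁) = 0, and let π_Y: U → U be the k-linear projection killing all words ending in X₀ (in the sense that π_Y fixes 1 and all words ending in X₁, and sends words ending in X₀ to 0). Define sec(w) = Σ_{i≥0} ((−1)^i/i!) ∂₀^i(w) X₀^i for w in the image of π_Y. Then sec maps into ker ∂₀ and π_Y ∘ sec = id on the image of π_Y; i.e., sec is a section of π_Y restricted to ker ∂₀. -/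
/- STATEMENT 5: with ∂₀ the derivation ∂₀(X₀)=1, ∂₀(X₁)=0 and π_Y the projection
killing words ending in X₀, the map sec(w) = Σᵢ ((-1)^i/i!) ∂₀^i(w) X₀^i (a finite
sum in each degree) maps the image of π_Y into ker ∂₀, and π_Y ∘ sec = id on the
image of π_Y. -/

noncomputable section

variable (k : Type) [Field k] [CharZero k]

abbrev U := FreeAlgebra k (Fin 2)

def X0 : U k := FreeAlgebra.ι k 0
def X1 : U k := FreeAlgebra.ι k 1

/-- The derivation of `k⟨⟨X₀,X₁⟩⟩` with prescribed values `g i` on the generators. -/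
def derOn (g : Fin 2 → U k) : U k →ₗ[k] U k :=
  (FreeAlgebra.basisFreeMonoid k (Fin 2)).constr k fun w =>
    ∑ i ∈ Finset.range (FreeMonoid.toList w).length,
      (((FreeMonoid.toList w).take i).map (FreeAlgebra.ι k)).prod *
        g ((FreeMonoid.toList w).getD i 0) *
        (((FreeMonoid.toList w).drop (i + 1)).map (FreeAlgebra.ι k)).prod

/-- `∂₀` : the derivation with `∂₀(X₀) = 1`, `∂₀(X₁) = 0`. -/
def d0 : U k →ₗ[k] U k := derOn k ![1, 0]

/-- `π_Y` : the projection fixing `1` and all words ending in `X₁`, and killing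
words ending in `X₀`. -/
def piY : U k →ₗ[k] U k :=
  (FreeAlgebra.basisFreeMonoid k (Fin 2)).constr k fun w =>
    if (FreeMonoid.toList w).getLast? = some 0 then 0
    else ((FreeMonoid.toList w).map (FreeAlgebra.ι k)).prod


/-! Only two properties of `∂₀`, `X₀` and `π_Y` matter: `∂₀(u X₀) = ∂₀(u) X₀ + u` and
`π_Y(u X₀) = 0`, both checked on words. Since the coefficients `cᵢ = (-1)^i / i!` satisfy
`(i + 1) c_{i+1} = -cᵢ`, applying `∂₀` to the partial sums of `sec(w)` telescopes: the `n`-th one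
goes to `cₙ ∂₀^{n+1}(w) X₀^n`, which vanishes once `∂₀^{n+1} w = 0`. And `π_Y` kills every term
with `i ≥ 1`, leaving `π_Y(w) = w`. -/

theorem FreeAlgebra.basisFreeMonoid_apply {R X : Type*} [CommSemiring R] (w : FreeMonoid X) :
    basisFreeMonoid R X w = FreeMonoid.lift (ι R) w := by
  simp [basisFreeMonoid, equivMonoidAlgebraFreeMonoid]

theorem FreeAlgebra.basisFreeMonoid_mul_of {R X : Type*} [CommSemiring R] (w : FreeMonoid X)
    (a : X) : basisFreeMonoid R X (w * .of a) = basisFreeMonoid R X w * ι R a := by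
  simp [basisFreeMonoid_apply]

theorem map_mul_pow_succ_of_map_mul {A F : Type*} [Semiring A] [FunLike F A A]
    [AddMonoidHomClass F A A] (D : F) {x : A}
    (hD : ∀ u, D (u * x) = D u * x + u) (u : A) (n : ℕ) :
    D (u * x ^ (n + 1)) = D u * x ^ (n + 1) + (n + 1) • (u * x ^ n) := by
  induction n generalizing u with
  | zero => simp [hD]
  | succ n ih =>
    rw [pow_succ' x (n + 1), ← mul_assoc, ih, hD, pow_succ' x n, ← mul_assoc u]
    simp only [add_mul, mul_assoc, succ_nsmul _ (n + 1)]
    abel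

theorem neg_one_pow_div_factorial_succ_mul {R : Type*} [Field R] [CharZero R] (n : ℕ) :
    (-1 : R) ^ (n + 1) / ((n + 1).factorial : R) * (n + 1) = -((-1) ^ n / (n.factorial : R)) := by
  rw [Nat.factorial_succ, Nat.cast_mul, Nat.cast_succ]
  field_simp
  ring

section Sec

variable {R A : Type*} [Field R] [CharZero R] [Ring A] [Algebra R A]

def secSum (D : Module.End R A) (x : A) (n : ℕ) (w : A) : A :=
  ∑ i ∈ Finset.range n, ((-1 : R) ^ i / (Nat.factorial i : R)) • ((D ^ i) w * x ^ i)

theorem map_secSum_succ {D : Module.End R A} {x : A} (hD : ∀ u, D (u * x) = D u * x + u)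
    (w : A) (n : ℕ) :
    D (secSum D x (n + 1) w) = ((-1 : R) ^ n / (n.factorial : R)) • ((D ^ (n + 1)) w * x ^ n) := by
  induction n with
  | zero => simp [secSum]
  | succ n ih =>
    rw [secSum, Finset.sum_range_succ, map_add, ← secSum, ih, map_smul,
      map_mul_pow_succ_of_map_mul D hD, ← Nat.cast_smul_eq_nsmul R, smul_add,
      smul_smul, Nat.cast_succ, neg_one_pow_div_factorial_succ_mul, neg_smul, pow_succ' D (n + 1),
      Module.End.mul_apply]
    abel

theorem map_secSum_succ_of_map_mul_eq_zero {P : A →ₗ[R] A} {x : A} (hP : ∀ u, P (u * x) = 0)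
    (D : Module.End R A) (w : A) (n : ℕ) : P (secSum D x (n + 1) w) = P w := by
  simp [secSum, Finset.sum_range_succ', pow_succ, ← mul_assoc, hP]

end Sec

theorem d0_mul_X0 (k : Type) [Field k] (u : U k) : d0 k (u * X0 k) = d0 k u * X0 k + u := by
  suffices (d0 k).comp (LinearMap.mulRight k (X0 k))
      = (LinearMap.mulRight k (X0 k)).comp (d0 k) + LinearMap.id from LinearMap.congr_fun this u
  refine (FreeAlgebra.basisFreeMonoid k (Fin 2)).ext fun w => ?_
  simp only [LinearMap.comp_apply, LinearMap.add_apply, LinearMap.id_apply,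
    LinearMap.mulRight_apply, X0, ← FreeAlgebra.basisFreeMonoid_mul_of]
  rw [d0, derOn, Module.Basis.constr_basis, Module.Basis.constr_basis, FreeMonoid.toList_mul,
    FreeMonoid.toList_of, List.length_append, List.length_singleton, Finset.sum_range_succ,
    Finset.sum_mul]
  congr 1
  · refine Finset.sum_congr rfl fun i hi => ?_
    rw [Finset.mem_range] at hi
    rw [List.take_append_of_le_length hi.le, List.getD_append _ _ _ _ hi,
      List.drop_append_of_le_length hi, List.map_append, List.prod_append]
    simp [mul_assoc]
  · simp [FreeAlgebra.basisFreeMonoid_apply, FreeMonoid.lift_apply]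

theorem piY_mul_X0 (k : Type) [Field k] (u : U k) : piY k (u * X0 k) = 0 := by
  suffices (piY k).comp (LinearMap.mulRight k (X0 k)) = 0 from LinearMap.congr_fun this u
  refine (FreeAlgebra.basisFreeMonoid k (Fin 2)).ext fun w => ?_
  simp [X0, ← FreeAlgebra.basisFreeMonoid_mul_of, piY]

theorem sec_section_of_piY (w : U k) (hw : piY k w = w)
    (N : ℕ) (hN : ∀ i, N ≤ i → (d0 k ^ i) w = 0) :
    d0 k (∑ i ∈ Finset.range N,
        ((-1 : k) ^ i / (Nat.factorial i : k)) • ((d0 k ^ i) w * X0 k ^ i)) = 0 ∧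
      piY k (∑ i ∈ Finset.range N,
        ((-1 : k) ^ i / (Nat.factorial i : k)) • ((d0 k ^ i) w * X0 k ^ i)) = w := by
  cases N with
  | zero =>
    obtain rfl : w = 0 := by simpa using hN 0 le_rfl
    simp
  | succ n =>
    exact ⟨(map_secSum_succ (d0_mul_X0 k) w n).trans (by simp [hN (n + 1) le_rfl]),
      (map_secSum_succ_of_map_mul_eq_zero (piY_mul_X0 k) _ w n).trans hw⟩

end
end

section
/- Let k be a field of characteristic 0, and in k⟨⟨Y₁,Y₂,…⟩⟩ define Uᵢ to be the weight-i homogeneous component of log(1 + Y₁ + Y₂ + ⋯), where Yₙ has weight n (so U₁ = Y₁, U₂ = Y₂ − Y₁²/2, etc.). Under the identification Yₘ = −X₀^{m−1}X₁ inside k⟨⟨X₀,X₁⟩⟩, let ∂₀ be the derivation with ∂₀(X₀) = 1, ∂₀(X₁) = 0. Then ∂₀(Uₙ) = (n−1)U_{n−1} for all n ≥ 1 (with U₀ := 0). -/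
/-! Since `∂₀ Yₘ = (m - 1) Yₘ₋₁`, the Leibniz rule turns `∂₀ (Y_{n₁} ⋯ Y_{n_r})` into the sum over
positions `i` of `(nᵢ - 1)` times the word with `nᵢ` lowered by one. Lowering a part `nᵢ ≥ 2` of a
composition of `n` is inverse to raising a part of a composition of `n - 1`, the coefficient
`(-1)^{r-1}/r` only sees the length `r`, which neither operation changes, and the weight `nᵢ - 1`
becomes the raised part `dᵢ`. Summing `dᵢ` over the positions of a composition `d` of `n - 1`
gives `n - 1`. -/

namespace List

theorem apply_prod_of_leibniz {A : Type*} [Semiring A] (D : A → A) (h1 : D 1 = 0)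
    (hmul : ∀ a b, D (a * b) = D a * b + a * D b) (l : List A) :
    D l.prod = ∑ i ∈ Finset.range l.length,
      (l.take i).prod * D (l.getD i 1) * (l.drop (i + 1)).prod := by
  induction l with
  | nil => simpa using h1
  | cons a t ih =>
    rw [prod_cons, hmul, ih, length_cons, Finset.sum_range_succ', add_comm, Finset.mul_sum]
    simp only [take_succ_cons, getD_cons_succ, drop_succ_cons, take_zero, prod_nil,
      getD_cons_zero, drop_zero, prod_cons, one_mul, mul_assoc]

theorem sum_set_add_getD (l : List ℕ) {i : ℕ} (hi : i < l.length) (v : ℕ) :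
    (l.set i v).sum + l.getD i 0 = l.sum + v := by
  rw [sum_set, getD_eq_getElem _ _ hi, if_pos hi]
  conv_rhs => rw [← take_append_drop i l, drop_eq_getElem_cons hi]
  simp only [sum_append, sum_cons]
  omega

theorem getD_set_self {α : Type*} (l : List α) {i : ℕ} (hi : i < l.length) (v d : α) :
    (l.set i v).getD i d = v := by
  rw [getD_eq_getElem _ _ (by simpa using hi), getElem_set_self]

theorem set_getD_self {α : Type*} (l : List α) (i : ℕ) (d : α) : l.set i (l.getD i d) = l := by
  rcases lt_or_ge i l.length with hi | hi
  · rw [getD_eq_getElem _ _ hi, set_getElem_self]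
  · exact set_eq_of_length_le hi

theorem sum_range_getD (l : List ℕ) : ∑ i ∈ Finset.range l.length, l.getD i 0 = l.sum := by
  rw [Finset.sum_range, ← Fin.sum_univ_getElem]
  exact Finset.sum_congr rfl fun i _ => getD_eq_getElem _ _ i.2

end List

namespace Composition

variable {n : ℕ}

theorem lt_length_of_two_le_getD (c : Composition n) {i : ℕ} (h : 2 ≤ c.blocks.getD i 0) :
    i < c.length := by
  by_contra hi
  rw [List.getD_eq_default _ _ (not_lt.1 hi)] at h
  omega

theorem pos_getD (c : Composition n) {i : ℕ} (hi : i < c.length) : 0 < c.blocks.getD i 0 := by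
  rw [List.getD_eq_getElem _ _ hi]
  exact c.blocks_pos (List.getElem_mem _)

def decrBlock (c : Composition (n + 1)) (i : ℕ) (h : 2 ≤ c.blocks.getD i 0) : Composition n where
  blocks := c.blocks.set i (c.blocks.getD i 0 - 1)
  blocks_pos hx := by
    rcases List.mem_or_eq_of_mem_set hx with hx | rfl
    exacts [c.blocks_pos hx, by omega]
  blocks_sum := by
    have := c.blocks.sum_set_add_getD (c.lt_length_of_two_le_getD h) (c.blocks.getD i 0 - 1)
    have := c.blocks_sum
    omega

def incrBlock (d : Composition n) (i : ℕ) (hi : i < d.length) : Composition (n + 1) where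
  blocks := d.blocks.set i (d.blocks.getD i 0 + 1)
  blocks_pos hx := by
    rcases List.mem_or_eq_of_mem_set hx with hx | rfl
    exacts [d.blocks_pos hx, by omega]
  blocks_sum := by
    have := d.blocks.sum_set_add_getD hi (d.blocks.getD i 0 + 1)
    have := d.blocks_sum
    omega

@[simp]
theorem length_decrBlock (c : Composition (n + 1)) (i : ℕ) (h : 2 ≤ c.blocks.getD i 0) :
    (c.decrBlock i h).length = c.length :=
  List.length_set ..

@[simp]
theorem length_incrBlock (d : Composition n) (i : ℕ) (hi : i < d.length) :
    (d.incrBlock i hi).length = d.length :=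
  List.length_set ..

theorem getD_decrBlock (c : Composition (n + 1)) (i : ℕ) (h : 2 ≤ c.blocks.getD i 0) :
    (c.decrBlock i h).blocks.getD i 0 = c.blocks.getD i 0 - 1 :=
  c.blocks.getD_set_self (c.lt_length_of_two_le_getD h) _ _

theorem getD_incrBlock (d : Composition n) (i : ℕ) (hi : i < d.length) :
    (d.incrBlock i hi).blocks.getD i 0 = d.blocks.getD i 0 + 1 :=
  d.blocks.getD_set_self hi _ _

theorem incrBlock_decrBlock (c : Composition (n + 1)) (i : ℕ) (h : 2 ≤ c.blocks.getD i 0)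
    (hi : i < (c.decrBlock i h).length) : (c.decrBlock i h).incrBlock i hi = c := by
  have hi' := c.lt_length_of_two_le_getD h
  ext1
  simp only [incrBlock, decrBlock, List.getD_set_self _ hi', List.set_set]
  rw [Nat.sub_add_cancel (by omega), List.set_getD_self]

theorem decrBlock_incrBlock (d : Composition n) (i : ℕ) (hi : i < d.length)
    (h : 2 ≤ (d.incrBlock i hi).blocks.getD i 0) : (d.incrBlock i hi).decrBlock i h = d := by
  ext1
  simp only [incrBlock, decrBlock, List.getD_set_self _ hi, List.set_set, Nat.add_sub_cancel,
    List.set_getD_self]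

theorem sum_sum_pred_smul_set {M : Type*} [AddCommMonoid M] (F : List ℕ → M) :
    ∑ c : Composition (n + 1), ∑ i ∈ Finset.range c.length,
        (c.blocks.getD i 0 - 1) • F (c.blocks.set i (c.blocks.getD i 0 - 1)) =
      ∑ d : Composition n, ∑ i ∈ Finset.range d.length, d.blocks.getD i 0 • F d.blocks := by
  rw [Finset.sum_sigma', Finset.sum_sigma',
    ← Finset.sum_filter_of_ne (p := fun p => 2 ≤ p.1.blocks.getD p.2 0) fun p _ hne => by
      by_contra h
      rw [Nat.sub_eq_zero_of_le (by omega), zero_smul] at hne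
      exact hne rfl]
  refine Finset.sum_bij' (fun p hp => ⟨p.1.decrBlock p.2 (Finset.mem_filter.1 hp).2, p.2⟩)
    (fun q hq => ⟨q.1.incrBlock q.2 (by simpa using hq), q.2⟩) ?_ ?_ ?_ ?_ ?_
  · rintro ⟨c, i⟩ hp
    simpa using c.lt_length_of_two_le_getD (Finset.mem_filter.1 hp).2
  · rintro ⟨d, i⟩ hq
    have hi : i < d.length := by simpa using hq
    exact Finset.mem_filter.2 ⟨by simpa using hi, by
      rw [getD_incrBlock]; exact Nat.succ_le_succ (d.pos_getD hi)⟩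
  · rintro ⟨c, i⟩ hp
    simp [incrBlock_decrBlock]
  · rintro ⟨d, i⟩ hq
    simp [decrBlock_incrBlock]
  · rintro ⟨c, i⟩ hp
    rw [getD_decrBlock]
    rfl

end Composition

namespace FreeAlgebra

variable {R X : Type*} [CommSemiring R]

theorem basisFreeMonoid_apply_s6 (w : FreeMonoid X) :
    basisFreeMonoid R X w = (w.toList.map (ι R)).prod := by
  rw [basisFreeMonoid, Module.Basis.map_apply, Finsupp.coe_basisSingleOne]
  change equivMonoidAlgebraFreeMonoid.symm (MonoidAlgebra.single w 1) = _
  simp [equivMonoidAlgebraFreeMonoid, AlgEquiv.ofAlgHom, MonoidAlgebra.lift_single,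
    FreeMonoid.lift_apply]

/-- `a ↦ a + ε D a` for the derivation `D` with `D (ι R x) = g x`: being multiplicative, this
map carries the Leibniz rule for its second component. -/
def toTrivSqZeroExt (g : X → FreeAlgebra R X) :
    FreeAlgebra R X →ₐ[R] TrivSqZeroExt (FreeAlgebra R X) (FreeAlgebra R X) :=
  lift R fun x => TrivSqZeroExt.inl (ι R x) + TrivSqZeroExt.inr (g x)

theorem fst_toTrivSqZeroExt (g : X → FreeAlgebra R X) (a : FreeAlgebra R X) :
    (toTrivSqZeroExt g a).fst = a := by
  have : (TrivSqZeroExt.fstHom R _ _).comp (toTrivSqZeroExt g) = AlgHom.id R _ := by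
    ext x
    simp [toTrivSqZeroExt]
  exact DFunLike.congr_fun this a

def derivLift (g : X → FreeAlgebra R X) : FreeAlgebra R X →ₗ[R] FreeAlgebra R X :=
  (TrivSqZeroExt.sndHom _ _).restrictScalars R ∘ₗ (toTrivSqZeroExt g).toLinearMap

variable (g : X → FreeAlgebra R X)

theorem derivLift_mul (a b : FreeAlgebra R X) :
    derivLift g (a * b) = derivLift g a * b + a * derivLift g b := by
  simp only [derivLift, LinearMap.comp_apply, AlgHom.toLinearMap_apply, map_mul,
    LinearMap.coe_restrictScalars, TrivSqZeroExt.sndHom_apply, TrivSqZeroExt.snd_mul,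
    fst_toTrivSqZeroExt, smul_eq_mul, MulOpposite.smul_eq_mul_unop, MulOpposite.unop_op]
  exact add_comm _ _

theorem derivLift_ι (x : X) : derivLift g (ι R x) = g x := by
  simp [derivLift, toTrivSqZeroExt]

theorem derivLift_one : derivLift g 1 = 0 := by
  simp [derivLift]

end FreeAlgebra

noncomputable section

variable (k : Type) [Field k] [CharZero k]

def Ye (m : ℕ) : U k := -(X0 k ^ (m - 1) * X1 k)

/-- `Uₙ`, the weight-`n` homogeneous component of `log(1 + Y₁ + Y₂ + ⋯)`:
`Uₙ = Σ ((-1)^{r-1}/r)·Y_{n₁}⋯Y_{n_r}` over compositions `(n₁,…,n_r)` of `n`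
(for `n = 0` this sum is `0`, since `1/0 = 0` in Lean). -/
def Ulog (n : ℕ) : U k :=
  ∑ c : Composition n,
    (((-1 : k) ^ (c.length - 1)) / (c.length : k)) • (c.blocks.map (Ye k)).prod

end

noncomputable section

variable (k : Type) [Field k]

theorem derOn_eq_derivLift (g : Fin 2 → U k) : derOn k g = FreeAlgebra.derivLift g := by
  refine (FreeAlgebra.basisFreeMonoid k (Fin 2)).ext fun w => ?_
  rw [derOn, Module.Basis.constr_basis, FreeAlgebra.basisFreeMonoid_apply_s6,
    List.apply_prod_of_leibniz _ (FreeAlgebra.derivLift_one g) (FreeAlgebra.derivLift_mul g),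
    List.length_map]
  refine Finset.sum_congr rfl fun i hi => ?_
  rw [Finset.mem_range] at hi
  rw [← List.map_take, ← List.map_drop, List.getD_eq_getElem _ _ hi,
    List.getD_eq_getElem _ _ (by simpa using hi), List.getElem_map, FreeAlgebra.derivLift_ι]

theorem d0_eq_derivLift : d0 k = FreeAlgebra.derivLift ![1, 0] :=
  derOn_eq_derivLift k _

theorem d0_one : d0 k 1 = 0 := by
  rw [d0_eq_derivLift, FreeAlgebra.derivLift_one]

theorem d0_mul (a b : U k) : d0 k (a * b) = d0 k a * b + a * d0 k b := by
  rw [d0_eq_derivLift, FreeAlgebra.derivLift_mul]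

theorem d0_X0_pow (m : ℕ) : d0 k (X0 k ^ m) = m • X0 k ^ (m - 1) := by
  induction m with
  | zero => simpa using d0_one k
  | succ m ih =>
    have hX0 : d0 k (X0 k) = 1 := by rw [d0_eq_derivLift, X0, FreeAlgebra.derivLift_ι]; rfl
    rw [pow_succ, d0_mul, ih, hX0, mul_one, smul_mul_assoc, succ_nsmul, Nat.add_sub_cancel]
    rcases m with _ | m
    · simp
    · rw [Nat.add_sub_cancel, ← pow_succ]

theorem d0_Ye (m : ℕ) : d0 k (Ye k m) = (m - 1) • Ye k (m - 1) := by
  have hX1 : d0 k (X1 k) = 0 := by rw [d0_eq_derivLift, X1, FreeAlgebra.derivLift_ι]; rfl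
  rw [Ye, Ye, map_neg, d0_mul, hX1, mul_zero, add_zero, d0_X0_pow, smul_mul_assoc, smul_neg]

theorem d0_prod_map_Ye (l : List ℕ) :
    d0 k (l.map (Ye k)).prod = ∑ i ∈ Finset.range l.length,
      (l.getD i 0 - 1) • ((l.set i (l.getD i 0 - 1)).map (Ye k)).prod := by
  rw [List.apply_prod_of_leibniz _ (d0_one k) (d0_mul k), List.length_map]
  refine Finset.sum_congr rfl fun i hi => ?_
  rw [Finset.mem_range] at hi
  rw [List.getD_eq_getElem _ _ (by simpa using hi), List.getElem_map, d0_Ye,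
    List.getD_eq_getElem _ _ hi, List.map_set, List.prod_set, if_pos (by simpa using hi),
    mul_smul_comm, smul_mul_assoc]

def ulogTerm (l : List ℕ) : U k :=
  (((-1 : k) ^ (l.length - 1)) / (l.length : k)) • (l.map (Ye k)).prod

theorem d0_ulogTerm (l : List ℕ) : d0 k (ulogTerm k l) =
    ∑ i ∈ Finset.range l.length, (l.getD i 0 - 1) • ulogTerm k (l.set i (l.getD i 0 - 1)) := by
  simp only [ulogTerm, map_smul, d0_prod_map_Ye, Finset.smul_sum, List.length_set]
  exact Finset.sum_congr rfl fun i _ => smul_comm _ _ _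

theorem d0_Ulog_succ (m : ℕ) : d0 k (Ulog k (m + 1)) = m • Ulog k m := calc
  d0 k (Ulog k (m + 1)) = ∑ c : Composition (m + 1), ∑ i ∈ Finset.range c.length,
      (c.blocks.getD i 0 - 1) • ulogTerm k (c.blocks.set i (c.blocks.getD i 0 - 1)) := by
    simp only [Ulog, map_sum]
    exact Finset.sum_congr rfl fun c _ => d0_ulogTerm k c.blocks
  _ = ∑ d : Composition m, ∑ i ∈ Finset.range d.length, d.blocks.getD i 0 • ulogTerm k d.blocks :=
    Composition.sum_sum_pred_smul_set _
  _ = m • Ulog k m := by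
    simp only [← Finset.sum_smul, Composition.length, List.sum_range_getD,
      Composition.blocks_sum, Ulog, Finset.smul_sum]
    rfl

variable [CharZero k]

theorem d0_Ulog (n : ℕ) (hn : 1 ≤ n) :
    d0 k (Ulog k n) = ((n : k) - 1) • Ulog k (n - 1) := by
  obtain ⟨m, rfl⟩ := Nat.exists_eq_add_of_le' hn
  rw [d0_Ulog_succ, Nat.add_sub_cancel, Nat.cast_add_one, add_sub_cancel_right,
    Nat.cast_smul_eq_nsmul]

end
end

section
/- Let k be a field of characteristic 0 and U = k⟨⟨X₀,X₁⟩⟩, with d_ψ the derivation sending X₀ ↦ 0 and X₁ ↦ [X₁,ψ], and s_ψ(v) = ψv + d_ψ(v). Then for every ψ ∈ U and every n ≥ 1, the operators s_ψ and s_{X₁ⁿ} commute: [s_ψ, s_{X₁ⁿ}] = 0. -/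
/- STATEMENT 13: s_ψ and s_{X₁ⁿ} commute for every ψ and n ≥ 1.
s_ψ(v) = ψv + d_ψ(v), and {ψ₁,ψ₂} = d_{ψ₂}(ψ₁) - d_{ψ₁}(ψ₂) - [ψ₁,ψ₂], one has
s_{{ψ₁,ψ₂}} = [s_{ψ₂}, s_{ψ₁}]. -/

noncomputable section

variable (k : Type) [Field k] [CharZero k]

/-- `d_ψ`. -/
def dF (ψ : U k) : U k →ₗ[k] U k := derOn k ![0, X1 k * ψ - ψ * X1 k]

/-- `s_ψ(v) = ψ·v + d_ψ(v)`. -/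
def sF (ψ : U k) (v : U k) : U k := ψ * v + dF k ψ v

set_option linter.unusedSectionVars false

lemma symm_single (l : List (Fin 2)) :
    FreeAlgebra.equivMonoidAlgebraFreeMonoid.symm
      (MonoidAlgebra.single (FreeMonoid.ofList l) (1:k)) = (l.map (FreeAlgebra.ι k)).prod := by
  induction l with
  | nil =>
    rw [show FreeMonoid.ofList ([] : List (Fin 2)) = 1 from rfl, ← MonoidAlgebra.one_def,
      map_one, List.map_nil, List.prod_nil]
  | cons a l ih =>
    rw [show FreeMonoid.ofList (a :: l) = FreeMonoid.of a * FreeMonoid.ofList l from rfl,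
      ← one_mul (1:k), ← MonoidAlgebra.single_mul_single, map_mul, ih, List.map_cons,
      List.prod_cons]
    congr 1
    rw [AlgEquiv.symm_apply_eq]
    simp [FreeAlgebra.equivMonoidAlgebraFreeMonoid]

lemma basis_apply (w : FreeMonoid (Fin 2)) :
    FreeAlgebra.basisFreeMonoid k (Fin 2) w
      = ((FreeMonoid.toList w).map (FreeAlgebra.ι k)).prod := by
  simp only [FreeAlgebra.basisFreeMonoid, Module.Basis.map_apply, Finsupp.coe_basisSingleOne,
    AlgEquiv.toLinearEquiv_apply]
  exact symm_single k (FreeMonoid.toList w)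

lemma derOn_apply (g : Fin 2 → U k) (w : FreeMonoid (Fin 2)) :
    derOn k g (FreeAlgebra.basisFreeMonoid k (Fin 2) w) =
      ∑ i ∈ Finset.range (FreeMonoid.toList w).length,
      (((FreeMonoid.toList w).take i).map (FreeAlgebra.ι k)).prod *
        g ((FreeMonoid.toList w).getD i 0) *
        (((FreeMonoid.toList w).drop (i + 1)).map (FreeAlgebra.ι k)).prod := by
  unfold derOn
  rw [Module.Basis.constr_basis]

lemma dF_X1pow (n : ℕ) : dF k (X1 k ^ n) = 0 := by
  have hc : X1 k * X1 k ^ n - X1 k ^ n * X1 k = 0 := by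
    rw [← pow_succ', ← pow_succ, sub_self]
  unfold dF
  rw [hc]
  unfold derOn
  have h : (fun w : FreeMonoid (Fin 2) => ∑ i ∈ Finset.range (FreeMonoid.toList w).length,
      (((FreeMonoid.toList w).take i).map (FreeAlgebra.ι k)).prod *
        (![0, 0] : Fin 2 → U k) ((FreeMonoid.toList w).getD i 0) *
        (((FreeMonoid.toList w).drop (i + 1)).map (FreeAlgebra.ι k)).prod)
      = (0 : FreeMonoid (Fin 2) → U k) := by
    funext w
    have hz : ∀ j : Fin 2, (![(0 : U k), 0]) j = 0 := by
      intro j; fin_cases j <;> simp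
    simp [hz]
  rw [h, map_zero]

lemma dF_X1pow_mul (ψ : U k) (n : ℕ) (v : U k) :
    dF k ψ (X1 k ^ n * v) =
      (X1 k ^ n * ψ - ψ * X1 k ^ n) * v + X1 k ^ n * dF k ψ v := by
  have key : (dF k ψ).comp (LinearMap.mulLeft k (X1 k ^ n)) =
      LinearMap.mulLeft k (X1 k ^ n * ψ - ψ * X1 k ^ n)
        + (LinearMap.mulLeft k (X1 k ^ n)).comp (dF k ψ) := by
    apply Module.Basis.ext (FreeAlgebra.basisFreeMonoid k (Fin 2))
    intro w
    set l := FreeMonoid.toList w with hl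
    set P : U k := (l.map (FreeAlgebra.ι k)).prod with hP
    have hb : FreeAlgebra.basisFreeMonoid k (Fin 2) w = P := basis_apply k w
    have hmul : X1 k ^ n * P =
        FreeAlgebra.basisFreeMonoid k (Fin 2) (FreeMonoid.ofList (List.replicate n 1 ++ l)) := by
      rw [basis_apply, FreeMonoid.toList_ofList, List.map_append, List.prod_append,
        List.map_replicate, List.prod_replicate]
      rfl
    have hd : derOn k ![0, X1 k * ψ - ψ * X1 k] P =
        ∑ j ∈ Finset.range l.length,
          ((l.take j).map (FreeAlgebra.ι k)).prod *
            (![0, X1 k * ψ - ψ * X1 k] : Fin 2 → U k) (l.getD j 0) *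
            ((l.drop (j + 1)).map (FreeAlgebra.ι k)).prod := by
      rw [← hb]; exact derOn_apply k _ w
    simp only [LinearMap.comp_apply, LinearMap.add_apply, LinearMap.mulLeft_apply]
    rw [show dF k ψ = derOn k ![0, X1 k * ψ - ψ * X1 k] from rfl, hb, hmul, derOn_apply, hd]
    rw [FreeMonoid.toList_ofList, List.length_append, List.length_replicate,
      Finset.sum_range_add]
    have hsum1 : (∑ i ∈ Finset.range n,
        (((List.replicate n (1:Fin 2) ++ l).take i).map (FreeAlgebra.ι k)).prod *
          (![0, X1 k * ψ - ψ * X1 k] : Fin 2 → U k)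
            ((List.replicate n (1:Fin 2) ++ l).getD i 0) *
          (((List.replicate n (1:Fin 2) ++ l).drop (i + 1)).map (FreeAlgebra.ι k)).prod)
        = X1 k ^ n * ψ * P - ψ * (X1 k ^ n * P) := by
      have hterm : ∀ i ∈ Finset.range n,
          (((List.replicate n (1:Fin 2) ++ l).take i).map (FreeAlgebra.ι k)).prod *
            (![0, X1 k * ψ - ψ * X1 k] : Fin 2 → U k)
              ((List.replicate n (1:Fin 2) ++ l).getD i 0) *
            (((List.replicate n (1:Fin 2) ++ l).drop (i + 1)).map (FreeAlgebra.ι k)).prod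
          = (X1 k ^ (i+1) * ψ * (X1 k ^ (n - (i+1)) * P))
            - (X1 k ^ i * ψ * (X1 k ^ (n - i) * P)) := by
        intro i hi
        rw [Finset.mem_range] at hi
        rw [List.take_append_of_le_length (by simp [Nat.le_of_lt hi]),
          List.take_replicate, min_eq_left (Nat.le_of_lt hi),
          List.getD_append _ _ _ _ (by simpa using hi),
          List.drop_append_of_le_length (by simpa using hi),
          List.drop_replicate, List.map_replicate, List.prod_replicate,
          List.map_append, List.prod_append, List.map_replicate, List.prod_replicate]
        have hg : (![0, X1 k * ψ - ψ * X1 k] : Fin 2 → U k)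
            ((List.replicate n (1:Fin 2)).getD i 0) = X1 k * ψ - ψ * X1 k := by
          rw [List.getD_eq_getElem _ _ (by simpa using hi)]
          simp
        rw [hg]
        have h1 : n - i = (n - (i+1)) + 1 := by omega
        rw [h1, pow_succ' (X1 k) (n - (i+1)), pow_succ (X1 k) i]
        noncomm_ring
      rw [Finset.sum_congr rfl hterm, Finset.sum_range_sub
        (fun j => X1 k ^ j * ψ * (X1 k ^ (n - j) * P))]
      simp
    have hsum2 : (∑ j ∈ Finset.range l.length,
        (((List.replicate n (1:Fin 2) ++ l).take (n + j)).map (FreeAlgebra.ι k)).prod *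
          (![0, X1 k * ψ - ψ * X1 k] : Fin 2 → U k)
            ((List.replicate n (1:Fin 2) ++ l).getD (n + j) 0) *
          (((List.replicate n (1:Fin 2) ++ l).drop (n + j + 1)).map (FreeAlgebra.ι k)).prod)
        = X1 k ^ n * ∑ j ∈ Finset.range l.length,
            ((l.take j).map (FreeAlgebra.ι k)).prod *
              (![0, X1 k * ψ - ψ * X1 k] : Fin 2 → U k) (l.getD j 0) *
              ((l.drop (j + 1)).map (FreeAlgebra.ι k)).prod := by
      rw [Finset.mul_sum]
      apply Finset.sum_congr rfl
      intro j _
      have h1 : (List.replicate n (1:Fin 2) ++ l).take (n + j)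
          = List.replicate n 1 ++ l.take j := by
        rw [List.take_append, List.take_replicate, List.length_replicate]
        congr 2
        · omega
        · omega
      have h2 : (List.replicate n (1:Fin 2) ++ l).getD (n + j) 0 = l.getD j 0 := by
        rw [List.getD_append_right _ _ _ _ (by simp), List.length_replicate,
          Nat.add_sub_cancel_left]
      have h3 : (List.replicate n (1:Fin 2) ++ l).drop (n + j + 1) = l.drop (j + 1) := by
        rw [List.drop_append, List.drop_replicate, List.length_replicate]
        have : n - (n + j + 1) = 0 := by omega
        rw [this, List.replicate_zero, List.nil_append]
        congr 1
        omega
      rw [h1, h2, h3, List.map_append, List.prod_append, List.map_replicate,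
        List.prod_replicate]
      simp only [X1, mul_assoc]
    rw [hsum1, hsum2]
    noncomm_ring
  have := LinearMap.congr_fun key v
  simpa using this

theorem s_commutes_with_sX1pow (ψ : U k) (n : ℕ) (hn : 1 ≤ n) :
    ∀ v : U k, sF k ψ (sF k (X1 k ^ n) v) = sF k (X1 k ^ n) (sF k ψ v) := by
  intro v
  simp only [sF, dF_X1pow, LinearMap.zero_apply, add_zero]
  rw [dF_X1pow_mul]
  noncomm_ring


end
end
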